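/- arXiv:2201.03334 — 3 statements merged into one kernel-verified Lean document; each statement's English description precedes it below -/
import Mathlib

section
/- Let X, Y be compact metric spaces with distinguished compact subsets A ⊂ X, B ⊂ Y, and let γ : A → B be an L-biLipschitz homeomorphism (L ≥ 1). Form the quotient space X ⊔ Y / ∼, where x ∼ γ(x) for x ∈ A, equipped with the quotient metric d̂. Then the identity maps (X, d̂|_{X×X}) → (X, d_X) and (Y, d̂|_{Y×Y}) → (Y, d_Y) are L-Lipschitz; in particular d̂|_{X×X} and d̂|_{Y×Y} are L-biLipschitz equivalent to d_X and d_Y respectively. -/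
/-!
Any pair of `1`-Lipschitz maps of `X` and `Y` into one metric space that agree on `a` and `γ a`
induces a gluing pseudometric, which is therefore at most `d̂`. Map `X` by `L⁻¹ • K`, with `K`
the Kuratowski embedding into `ℓ^∞`. Since `γ⁻¹` is `L`-Lipschitz on `γ '' A`, the map
`γ a ↦ L⁻¹ • K a` is `1`-Lipschitz there, and it extends to all of `Y` coordinatewise by
McShane's extension theorem. The induced pseudometric is `L⁻¹ d_X` on `X`, so `L⁻¹ d_X ≤ d̂`;
the same argument with the roles of `X` and `Y` exchanged bounds `d_Y`.
-/

open Sum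

/-- `d̂` is a gluing pseudometric for the gluing of `X` and `Y` along `γ : A → B`:
it is a pseudometric on `X ⊔ Y`, the two inclusions are `1`-Lipschitz, and each point
`a ∈ A` is identified with `γ a`. -/
def IsGluingPseudometric {X Y : Type*} [MetricSpace X] [MetricSpace Y]
    (A : Set X) (γ : X → Y) (d : X ⊕ Y → X ⊕ Y → ℝ) : Prop :=
  (∀ p, d p p = 0) ∧ (∀ p q, d p q = d q p) ∧ (∀ p q s, d p s ≤ d p q + d q s) ∧
    (∀ p q, 0 ≤ d p q) ∧
    (∀ x x' : X, d (inl x) (inl x') ≤ dist x x') ∧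
    (∀ y y' : Y, d (inr y) (inr y') ≤ dist y y') ∧
    (∀ a ∈ A, d (inl a) (inr (γ a)) = 0)

open Function Set TopologicalSpace lp ENNReal

section

variable {X Y : Type*} [MetricSpace X] [MetricSpace Y]

theorem IsGluingPseudometric.of_lipschitzWith {Z : Type*} [PseudoMetricSpace Z]
    {A : Set X} {γ : X → Y} {f : X → Z} {g : Y → Z}
    (hf : LipschitzWith 1 f) (hg : LipschitzWith 1 g) (hfg : ∀ a ∈ A, f a = g (γ a)) :
    IsGluingPseudometric A γ fun p q => dist (Sum.elim f g p) (Sum.elim f g q) :=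
  ⟨fun _ => dist_self _, fun _ _ => dist_comm _ _, fun _ _ _ => dist_triangle _ _ _,
    fun _ _ => dist_nonneg, fun x x' => by simpa using hf.dist_le_mul x x',
    fun y y' => by simpa using hg.dist_le_mul y y', fun a ha => by simp [hfg a ha]⟩

theorem exists_lipschitzWith_one_comp_eq {α ι : Type*} {A : Set α} {γ : α → Y}
    {f : α → ℓ^∞(ι, ℝ)} (hf : ∀ a ∈ A, ∀ a' ∈ A, dist (f a) (f a') ≤ dist (γ a) (γ a')) :
    ∃ g : Y → ℓ^∞(ι, ℝ), LipschitzWith 1 g ∧ ∀ a ∈ A, f a = g (γ a) := by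
  cases isEmpty_or_nonempty α
  · exact ⟨fun _ => 0, LipschitzWith.const' 0, fun a => isEmptyElim a⟩
  have hinv : ∀ a ∈ A, f (invFunOn γ A (γ a)) = f a := fun a ha => by
    obtain ⟨hmem, heq⟩ := invFunOn_pos (f := γ) ⟨a, ha, rfl⟩
    exact dist_le_zero.1 <| (hf _ hmem a ha).trans_eq (by rw [heq, dist_self])
  have hlip : LipschitzOnWith 1 (f ∘ invFunOn γ A) (γ '' A) := by
    refine LipschitzOnWith.of_dist_le_mul ?_
    rintro _ ⟨a, ha, rfl⟩ _ ⟨a', ha', rfl⟩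
    simpa [hinv a ha, hinv a' ha'] using hf a ha a' ha'
  obtain ⟨g, hg, hfg⟩ := hlip.extend_lp_infty
  exact ⟨g, hg, fun a ha => (hinv a ha).symm.trans (hfg (mem_image_of_mem γ ha))⟩

theorem dist_smul_kuratowskiEmbedding [SeparableSpace X] {c : ℝ} (hc : 0 ≤ c) (x x' : X) :
    dist (c • kuratowskiEmbedding X x) (c • kuratowskiEmbedding X x') = c * dist x x' := by
  rw [dist_smul₀, (kuratowskiEmbedding.isometry X).dist_eq, Real.norm_of_nonneg hc]

theorem lipschitzWith_one_smul_kuratowskiEmbedding [SeparableSpace X] {c : ℝ} (hc₀ : 0 ≤ c)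
    (hc₁ : c ≤ 1) : LipschitzWith 1 fun x => c • kuratowskiEmbedding X x :=
  LipschitzWith.of_dist_le_mul fun x x' => by
    rw [dist_smul_kuratowskiEmbedding hc₀]
    simpa using mul_le_of_le_one_left dist_nonneg hc₁

theorem exists_isGluingPseudometric_inl [SeparableSpace X] {A : Set X} {γ : X → Y} {c : ℝ}
    (hc₀ : 0 ≤ c) (hc₁ : c ≤ 1) (hγ : ∀ a ∈ A, ∀ a' ∈ A, c * dist a a' ≤ dist (γ a) (γ a')) :
    ∃ d, IsGluingPseudometric A γ d ∧ ∀ x x', d (inl x) (inl x') = c * dist x x' := by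
  obtain ⟨g, hg, hfg⟩ := exists_lipschitzWith_one_comp_eq (A := A) (γ := γ)
    (f := fun x => c • kuratowskiEmbedding X x) fun a ha a' ha' => by
      simpa [dist_smul_kuratowskiEmbedding hc₀] using hγ a ha a' ha'
  exact ⟨_, .of_lipschitzWith (lipschitzWith_one_smul_kuratowskiEmbedding hc₀ hc₁) hg hfg,
    fun x x' => dist_smul_kuratowskiEmbedding hc₀ x x'⟩

theorem exists_isGluingPseudometric_inr [SeparableSpace Y] {A : Set X} {γ : X → Y} {c : ℝ}
    (hc₀ : 0 ≤ c) (hc₁ : c ≤ 1) (hγ : ∀ a ∈ A, ∀ a' ∈ A, c * dist (γ a) (γ a') ≤ dist a a') :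
    ∃ d, IsGluingPseudometric A γ d ∧ ∀ y y', d (inr y) (inr y') = c * dist y y' := by
  obtain ⟨g, hg, hfg⟩ := exists_lipschitzWith_one_comp_eq (A := A) (γ := id)
    (f := fun a => c • kuratowskiEmbedding Y (γ a)) fun a ha a' ha' => by
      simpa [dist_smul_kuratowskiEmbedding hc₀] using hγ a ha a' ha'
  exact ⟨_, .of_lipschitzWith hg (lipschitzWith_one_smul_kuratowskiEmbedding hc₀ hc₁)
    fun a ha => (hfg a ha).symm, fun y y' => dist_smul_kuratowskiEmbedding hc₀ y y'⟩

end

theorem quotient_metric_biLipschitz_general {X Y : Type*} [MetricSpace X] [MetricSpace Y]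
    [CompactSpace X] [CompactSpace Y]
    (A : Set X)
    (L : ℝ) (hL : 1 ≤ L) (γ : X → Y)
    (hγbl : ∀ a ∈ A, ∀ a' ∈ A,
      dist a a' ≤ L * dist (γ a) (γ a') ∧ dist (γ a) (γ a') ≤ L * dist a a')
    (dhat : X ⊕ Y → X ⊕ Y → ℝ)
    (hmax : ∀ d' : X ⊕ Y → X ⊕ Y → ℝ,
      IsGluingPseudometric A γ d' → ∀ p q, d' p q ≤ dhat p q) :
    (∀ x x' : X, dist x x' ≤ L * dhat (inl x) (inl x')) ∧
      (∀ y y' : Y, dist y y' ≤ L * dhat (inr y) (inr y')) := by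
  have hL₀ : 0 < L := one_pos.trans_le hL
  have hc₀ : 0 ≤ L⁻¹ := inv_nonneg.2 hL₀.le
  have hc₁ : L⁻¹ ≤ 1 := inv_le_one_of_one_le₀ hL
  obtain ⟨dX, hdX, hdX_inl⟩ := exists_isGluingPseudometric_inl hc₀ hc₁ fun a ha a' ha' =>
    (inv_mul_le_iff₀ hL₀).2 (hγbl a ha a' ha').1
  obtain ⟨dY, hdY, hdY_inr⟩ := exists_isGluingPseudometric_inr hc₀ hc₁ fun a ha a' ha' =>
    (inv_mul_le_iff₀ hL₀).2 (hγbl a ha a' ha').2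
  refine ⟨fun x x' => ?_, fun y y' => ?_⟩
  · exact (inv_mul_le_iff₀ hL₀).1 (hdX_inl x x' ▸ hmax dX hdX (inl x) (inl x'))
  · exact (inv_mul_le_iff₀ hL₀).1 (hdY_inr y y' ▸ hmax dY hdY (inr y) (inr y'))

/-- Let `X, Y` be compact metric spaces, `A ⊆ X`, `B ⊆ Y` compact, and
`γ : A → B` an `L`-biLipschitz homeomorphism (`L ≥ 1`). Let `d̂` be the quotient
metric on `X ⊔ Y / ∼` (the largest gluing pseudometric). Then the identity maps
`(X, d̂|_X) → (X, d_X)` and `(Y, d̂|_Y) → (Y, d_Y)` are `L`-Lipschitz; since the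
other directions are automatically `1`-Lipschitz, `d̂|_X` and `d̂|_Y` are
`L`-biLipschitz equivalent to `d_X` and `d_Y`. -/
theorem quotient_metric_biLipschitz {X Y : Type*} [MetricSpace X] [MetricSpace Y]
    [CompactSpace X] [CompactSpace Y]
    (A : Set X) (B : Set Y) (hA : IsCompact A) (hB : IsCompact B)
    (L : ℝ) (hL : 1 ≤ L) (γ : X → Y) (hγ : Set.BijOn γ A B)
    (hγbl : ∀ a ∈ A, ∀ a' ∈ A,
      dist a a' ≤ L * dist (γ a) (γ a') ∧ dist (γ a) (γ a') ≤ L * dist a a')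
    (dhat : X ⊕ Y → X ⊕ Y → ℝ)
    (hdhat : IsGluingPseudometric A γ dhat)
    (hmax : ∀ d' : X ⊕ Y → X ⊕ Y → ℝ,
      IsGluingPseudometric A γ d' → ∀ p q, d' p q ≤ dhat p q) :
    (∀ x x' : X, dist x x' ≤ L * dhat (inl x) (inl x')) ∧
      (∀ y y' : Y, dist y y' ≤ L * dhat (inr y) (inr y')) :=
  quotient_metric_biLipschitz_general A L hL γ hγbl dhat hmax
end

section
/- Let X be a compact metric space homeomorphic to a closed surface that is not the 2-sphere (e.g. with nontrivial fundamental group or nonempty boundary). Then the infimum η := inf{ℓ(c) : c is a non-contractible closed curve in X} over the lengths of non-contractible rectifiable loops in X is strictly positive, provided X admits at least one rectifiable non-contractible loop and X is a geodesic space which is LLC and Ahlfors 2-regular. -/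
/-! A surface is strongly locally contractible, since its charts take values in the convex
half-plane. In a compact metric space in which every point has a neighbourhood whose loops are
null-homotopic, let `δ` be a Lebesgue number of the cover by such neighbourhoods: a loop of length
less than `δ` stays within distance `δ` of its basepoint, hence inside one of them, and so is
contractible. -/

open MeasureTheory

/-- Ahlfors 2-regularity with constant `K`. -/
def Ahlfors2Regular (Z : Type*) [MetricSpace Z] [MeasurableSpace Z] [BorelSpace Z]
    (K : ℝ) : Prop :=
  0 < K ∧ ∀ (z : Z) (r : ℝ), 0 < r → r < Metric.diam (Set.univ : Set Z) →
    ENNReal.ofReal (K⁻¹ * r ^ 2) ≤ μH[2] (Metric.ball z r) ∧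
      μH[2] (Metric.ball z r) ≤ ENNReal.ofReal (K * r ^ 2)

/-- Linear local connectedness with constant `λ`. -/
def LLC (Z : Type*) [MetricSpace Z] (lam : ℝ) : Prop :=
  1 ≤ lam ∧ ∀ (z : Z) (r : ℝ), 0 < r →
    (∀ x ∈ Metric.ball z r, ∀ y ∈ Metric.ball z r,
      ∃ C : Set Z, IsCompact C ∧ IsConnected C ∧ x ∈ C ∧ y ∈ C ∧
        C ⊆ Metric.ball z (lam * r)) ∧
    (∀ x ∉ Metric.ball z r, ∀ y ∉ Metric.ball z r,
      ∃ C : Set Z, IsCompact C ∧ IsConnected C ∧ x ∈ C ∧ y ∈ C ∧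
        C ⊆ (Metric.ball z (r / lam))ᶜ)

/-- The length of a loop, as the total variation of the underlying map. -/
noncomputable def loopLength {Z : Type*} [MetricSpace Z] {x : Z} (γ : Path x x) : ENNReal :=
  eVariationOn (⇑γ) Set.univ

open Topology

theorem Convex.stronglyLocallyContractibleSpace {E : Type*} [NormedAddCommGroup E]
    [NormedSpace ℝ E] {s : Set E} (hs : Convex ℝ s) : StronglyLocallyContractibleSpace s := by
  refine .of_bases (fun x ↦ (nhds_subtype s x).symm ▸ Metric.nhds_basis_ball.comap Subtype.val)
    fun x r hr ↦ ?_
  have hconvex : Convex ℝ (Subtype.val '' (Subtype.val ⁻¹' Metric.ball x.1 r : Set s)) := by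
    rw [Subtype.image_preimage_coe]
    exact hs.inter (convex_ball _ _)
  have := hconvex.contractibleSpace ⟨x, ⟨x, Metric.mem_ball_self hr, rfl⟩⟩
  exact (IsEmbedding.subtypeVal.homeomorphImage _).contractibleSpace

instance (n : ℕ) [NeZero n] : StronglyLocallyContractibleSpace (EuclideanHalfSpace n) :=
  EuclideanHalfSpace.convex.stronglyLocallyContractibleSpace

theorem ChartedSpace.stronglyLocallyContractibleSpace (H : Type*) [TopologicalSpace H]
    [StronglyLocallyContractibleSpace H] (M : Type*) [TopologicalSpace M] [ChartedSpace H M] :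
    StronglyLocallyContractibleSpace M := by
  refine .of_bases (s := fun m V ↦ (chartAt H m).symm '' V)
    (p := fun m V ↦ V ∈ 𝓝 (chartAt H m m) ∧ ContractibleSpace V ∧ V ⊆ (chartAt H m).target)
    (fun m ↦ ?_) fun m V ⟨_, _, hVt⟩ ↦ ?_
  · rw [← (chartAt H m).symm_map_nhds_eq (mem_chart_source H m)]
    exact (contractible_subset_basis (chartAt H m).open_target
      (mem_chart_target H m)).map _
  · exact ((chartAt H m).symm.homeomorphOfImageSubsetSource hVt rfl).symm.contractibleSpace

def SemilocallySimplyConnected (X : Type*) [TopologicalSpace X] : Prop :=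
  ∀ x : X, ∃ U ∈ 𝓝 x, ∀ (y : X) (γ : Path y y), Set.range γ ⊆ U → γ.Homotopic (Path.refl y)

theorem IsSimplyConnected.homotopic_refl_of_range_subset {X : Type*} [TopologicalSpace X]
    {U : Set X} (hU : IsSimplyConnected U) {y : X} (γ : Path y y) (hγ : Set.range γ ⊆ U) :
    γ.Homotopic (Path.refl y) :=
  let ⟨F, _⟩ := (isSimplyConnected_iff_exists_homotopy_refl_forall_mem.1 hU).2 y γ
    fun t ↦ hγ ⟨t, rfl⟩
  ⟨F⟩

theorem StronglyLocallyContractibleSpace.semilocallySimplyConnected (X : Type*)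
    [TopologicalSpace X] [StronglyLocallyContractibleSpace X] : SemilocallySimplyConnected X :=
  fun x ↦
    let ⟨U, hU, _⟩ := (contractible_basis x).ex_mem
    ⟨U, hU, fun _ γ hγ ↦ IsSimplyConnected.homotopic_refl_of_range_subset
      (SimplyConnectedSpace.ofContractible U) γ hγ⟩

theorem edist_le_loopLength {Z : Type*} [MetricSpace Z] {x : Z} (γ : Path x x)
    (t : unitInterval) : edist (γ t) x ≤ loopLength γ := by
  simpa only [loopLength, γ.source] using
    eVariationOn.edist_le γ (Set.mem_univ t) (Set.mem_univ 0)

theorem SemilocallySimplyConnected.exists_pos_le_loopLength {X : Type*} [MetricSpace X]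
    [CompactSpace X] (hX : SemilocallySimplyConnected X) :
    ∃ η : ENNReal, 0 < η ∧ ∀ (x : X) (γ : Path x x),
      ¬ γ.Homotopic (Path.refl x) → η ≤ loopLength γ := by
  choose U hU hUloops using hX
  obtain ⟨δ, hδ, hball⟩ := lebesgue_number_lemma_of_emetric_nhds isCompact_univ
    fun x _ ↦ hU x
  refine ⟨δ, hδ, fun x γ hγ ↦ not_lt.1 fun hshort ↦ hγ ?_⟩
  obtain ⟨y, hxy⟩ := hball x (Set.mem_univ x)
  exact hUloops y x γ (Set.range_subset_iff.2 fun t ↦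
    hxy ((edist_le_loopLength γ t).trans_lt hshort))

theorem systole_pos_general {X : Type*} [MetricSpace X] [CompactSpace X]
    (M : Type*) [TopologicalSpace M]
    [ChartedSpace (EuclideanHalfSpace 2) M]
    (e : X ≃ₜ M) :
    ∃ η : ENNReal, 0 < η ∧ ∀ (x : X) (γ : Path x x),
      ¬ γ.Homotopic (Path.refl x) → η ≤ loopLength γ := by
  have := ChartedSpace.stronglyLocallyContractibleSpace (EuclideanHalfSpace 2) M
  have := e.isOpenEmbedding.stronglyLocallyContractibleSpace
  exact (StronglyLocallyContractibleSpace.semilocallySimplyConnected X).exists_pos_le_loopLength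

/-- Let `X` be a compact geodesic metric space which is LLC and Ahlfors 2-regular and
homeomorphic to a (possibly bordered) compact surface `M` not homeomorphic to the
2-sphere. If `X` admits a rectifiable non-contractible loop, then the infimum of the
lengths of non-contractible loops in `X` is strictly positive. -/
theorem systole_pos {X : Type*} [MetricSpace X] [CompactSpace X]
    [MeasurableSpace X] [BorelSpace X]
    (M : Type*) [TopologicalSpace M] [CompactSpace M] [T2Space M]
    [ChartedSpace (EuclideanHalfSpace 2) M]
    (e : X ≃ₜ M)
    (hns : IsEmpty (M ≃ₜ ↥(Metric.sphere (0 : EuclideanSpace ℝ (Fin 3)) 1)))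
    (hgeo : ∀ x y : X, ∃ γ : Path x y,
      eVariationOn (⇑γ) Set.univ = ENNReal.ofReal (dist x y))
    (lam K : ℝ) (hLLC : LLC X lam) (hreg : Ahlfors2Regular X K)
    (hex : ∃ (x : X) (γ : Path x x), loopLength γ < ⊤ ∧ ¬ γ.Homotopic (Path.refl x)) :
    ∃ η : ENNReal, 0 < η ∧ ∀ (x : X) (γ : Path x x),
      ¬ γ.Homotopic (Path.refl x) → η ≤ loopLength γ :=
  systole_pos_general M e
end

section
/- Let X be a geodesic metric surface and η : S¹ → X, c : [0,s] → X be, respectively, a unit-speed biLipschitz curve and a unit-speed geodesic with common endpoint y = η(0) = c(0), such that c realizes the distance from its other endpoint x to the image of η, i.e. d(x, |η|) = d(x, y) = s. Then for all r ∈ [0,s], d(η(−r), c(r)) ≥ r; consequently the concatenation of η|_{[−s,0]} and c|_{[0,s]} is a biLipschitz curve with biLipschitz constant depending only on that of η. -/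
/-!
For `a, b ∈ [0, s]` put `p = η (-a)` and `q = c b`. Since `x` is at distance `s` from `|η|` but
only `s - b` from `q`, the triangle inequality at `x` gives `b ≤ d(p, q)`. Going through `y` gives
`d(p, q) ≤ a + b`, and `a ≤ L d(p, y) ≤ L (d(p, q) + b) ≤ 2L d(p, q)`, so `a + b ≤ (2L + 1) d(p, q)`:
the concatenation is `(2L + 1)`-biLipschitz.
-/

open Set

variable {X : Type*} [MetricSpace X]

def UnitSpeedBiLipschitzOn (K : ℝ) (f : ℝ → X) (S : Set ℝ) : Prop :=
  ∀ t₁ ∈ S, ∀ t₂ ∈ S, dist (f t₁) (f t₂) ≤ |t₁ - t₂| ∧ |t₁ - t₂| ≤ K * dist (f t₁) (f t₂)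

theorem UnitSpeedBiLipschitzOn.mono_const {K K' : ℝ} {f : ℝ → X} {S : Set ℝ}
    (hf : UnitSpeedBiLipschitzOn K f S) (hK : K ≤ K') : UnitSpeedBiLipschitzOn K' f S :=
  fun t₁ h₁ t₂ h₂ =>
    ⟨(hf t₁ h₁ t₂ h₂).1,
      (hf t₁ h₁ t₂ h₂).2.trans (mul_le_mul_of_nonneg_right hK dist_nonneg)⟩

theorem unitSpeedBiLipschitzOn_of_dist_eq {K : ℝ} {f : ℝ → X} {S : Set ℝ} (hK : 1 ≤ K)
    (hf : ∀ t₁ ∈ S, ∀ t₂ ∈ S, dist (f t₁) (f t₂) = |t₁ - t₂|) :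
    UnitSpeedBiLipschitzOn K f S := by
  intro t₁ h₁ t₂ h₂
  rw [hf t₁ h₁ t₂ h₂]
  exact ⟨le_rfl, le_mul_of_one_le_left (abs_nonneg _) hK⟩

theorem UnitSpeedBiLipschitzOn.piecewise {K u v : ℝ} {f g : ℝ → X}
    (hf : UnitSpeedBiLipschitzOn K f (Icc u 0)) (hg : UnitSpeedBiLipschitzOn K g (Icc 0 v))
    (hfg : ∀ t₁ ∈ Icc u 0, ∀ t₂ ∈ Icc 0 v,
      dist (f t₁) (g t₂) ≤ t₂ - t₁ ∧ t₂ - t₁ ≤ K * dist (f t₁) (g t₂)) :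
    UnitSpeedBiLipschitzOn K (fun t => if t ≤ 0 then f t else g t) (Icc u v) := by
  intro t₁ ⟨hu₁, hv₁⟩ t₂ ⟨hu₂, hv₂⟩
  by_cases h₁ : t₁ ≤ 0 <;> by_cases h₂ : t₂ ≤ 0 <;> simp only [h₁, h₂, if_true, if_false]
  · exact hf t₁ ⟨hu₁, h₁⟩ t₂ ⟨hu₂, h₂⟩
  · rw [abs_of_nonpos (by linarith), neg_sub]
    exact hfg t₁ ⟨hu₁, h₁⟩ t₂ ⟨by linarith, hv₂⟩
  · rw [abs_of_nonneg (by linarith), dist_comm]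
    exact hfg t₂ ⟨hu₂, h₂⟩ t₁ ⟨by linarith, hv₁⟩
  · exact hg t₁ ⟨by linarith, hv₁⟩ t₂ ⟨by linarith, hv₂⟩

theorem le_dist_of_le_dist_endpoint {c : ℝ → X} {s b : ℝ} {p : X}
    (hc : ∀ t₁ ∈ Icc 0 s, ∀ t₂ ∈ Icc 0 s, dist (c t₁) (c t₂) = |t₁ - t₂|)
    (hb : b ∈ Icc 0 s) (hp : s ≤ dist (c s) p) : b ≤ dist p (c b) := by
  have hcb : dist (c s) (c b) = s - b := by
    rw [hc s ⟨hb.1.trans hb.2, le_rfl⟩ b hb, abs_of_nonneg (by linarith [hb.2])]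
  linarith [dist_triangle (c s) (c b) p, dist_comm (c b) p]

theorem dist_le_add_and_add_le_mul_dist {p q y : X} {a b L : ℝ} (hL : 0 ≤ L)
    (hpy : dist p y ≤ a) (hpy' : a ≤ L * dist p y) (hyq : dist y q ≤ b) (hb : b ≤ dist p q) :
    dist p q ≤ a + b ∧ a + b ≤ (2 * L + 1) * dist p q := by
  refine ⟨by linarith [dist_triangle p y q], ?_⟩
  have hpy'' : dist p y ≤ 2 * dist p q := by
    linarith [dist_triangle p q y, dist_comm q y]
  nlinarith [mul_le_mul_of_nonneg_left hpy'' hL]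

/-- Let `X` be a geodesic metric space, `η` a unit-speed `L`-biLipschitz curve on
`[-s, 0]` and `c` a unit-speed geodesic on `[0, s]` with common endpoint
`y = η 0 = c 0`, such that `c` realizes the distance from its other endpoint
`x = c s` to the image of `η`, i.e. `d(x, |η|) = d(x,y) = s`. Then
`d(η(-r), c(r)) ≥ r` for all `r ∈ [0,s]`, and the concatenation of `η|_{[-s,0]}`
and `c|_{[0,s]}` is a biLipschitz curve with constant depending only on `L`. -/
theorem geodesic_concatenation_biLipschitz :
    ∀ L : ℝ, 1 ≤ L → ∃ L' : ℝ, 1 ≤ L' ∧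
      ∀ (X : Type) [MetricSpace X],
        (∀ a b : X, ∃ γ : ℝ → X, γ 0 = a ∧ γ (dist a b) = b ∧
          ∀ t₁ ∈ Set.Icc 0 (dist a b), ∀ t₂ ∈ Set.Icc 0 (dist a b),
            dist (γ t₁) (γ t₂) = |t₁ - t₂|) →
        ∀ (x y : X) (s : ℝ), 0 < s → ∀ (η c : ℝ → X),
          η 0 = y → c 0 = y → c s = x →
          (∀ t₁ ∈ Set.Icc (-s) (0 : ℝ), ∀ t₂ ∈ Set.Icc (-s) (0 : ℝ),
            dist (η t₁) (η t₂) ≤ |t₁ - t₂| ∧ |t₁ - t₂| ≤ L * dist (η t₁) (η t₂)) →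
          (∀ t₁ ∈ Set.Icc (0 : ℝ) s, ∀ t₂ ∈ Set.Icc (0 : ℝ) s,
            dist (c t₁) (c t₂) = |t₁ - t₂|) →
          dist x y = s →
          (∀ t ∈ Set.Icc (-s) (0 : ℝ), s ≤ dist x (η t)) →
          (∀ r ∈ Set.Icc (0 : ℝ) s, r ≤ dist (η (-r)) (c r)) ∧
            (∀ t₁ ∈ Set.Icc (-s) s, ∀ t₂ ∈ Set.Icc (-s) s,
              dist ((fun t => if t ≤ 0 then η t else c t) t₁)
                  ((fun t => if t ≤ 0 then η t else c t) t₂) ≤ |t₁ - t₂| ∧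
                |t₁ - t₂| ≤
                  L' * dist ((fun t => if t ≤ 0 then η t else c t) t₁)
                    ((fun t => if t ≤ 0 then η t else c t) t₂)) := by
  intro L hL
  refine ⟨2 * L + 1, by linarith, ?_⟩
  intro X _ _ x y s hs η c hη0 hc0 hcs hη hc _ hfar
  subst hcs
  have hcross : ∀ t₁ ∈ Icc (-s) 0, ∀ t₂ ∈ Icc 0 s, t₂ ≤ dist (η t₁) (c t₂) :=
    fun t₁ h₁ t₂ h₂ => le_dist_of_le_dist_endpoint hc h₂ (hfar t₁ h₁)
  refine ⟨fun r hr => hcross (-r) ⟨by linarith [hr.2], by linarith [hr.1]⟩ r hr, ?_⟩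
  refine UnitSpeedBiLipschitzOn.piecewise (UnitSpeedBiLipschitzOn.mono_const hη (by linarith))
    (unitSpeedBiLipschitzOn_of_dist_eq (by linarith) hc) fun t₁ h₁ t₂ h₂ => ?_
  have hηy := hη t₁ h₁ 0 ⟨by linarith, le_rfl⟩
  have hyc := hc 0 ⟨le_rfl, hs.le⟩ t₂ h₂
  rw [hη0, sub_zero, abs_of_nonpos h₁.2] at hηy
  rw [hc0, zero_sub, abs_neg, abs_of_nonneg h₂.1] at hyc
  rw [sub_eq_neg_add]
  exact dist_le_add_and_add_le_mul_dist (by linarith) hηy.1 hηy.2 hyc.le (hcross t₁ h₁ t₂ h₂)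
end
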